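/- arXiv:1802.03445 — 7 statements merged into one kernel-verified Lean document; each statement's English description precedes it below -/
import Mathlib

section
/- Let $\mathcal{A}$ be the operator on polynomials defined by $(\mathcal{A}p)(\lambda) = \lambda p(\lambda) + p(0)(c\lambda+d)$, with $c,d$ real constants. Then for every positive integer $n$ and every polynomial $p$, $\mathcal{A}^n(p) = \lambda^n p(\lambda) + p(0)(c\lambda+d)(\lambda^{n-1} + \lambda^{n-2}d + \cdots + d^{n-1})$. -/
open Polynomial

theorem stmt_2 (c d : ℝ)
    (A : Polynomial ℂ → Polynomial ℂ)
    (hA : ∀ p : Polynomial ℂ, A p = X * p + C (p.eval 0) * (C (c : ℂ) * X + C (d : ℂ))) :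
    ∀ n : ℕ, 0 < n → ∀ p : Polynomial ℂ,
      A^[n] p = X ^ n * p
        + C (p.eval 0) * (C (c : ℂ) * X + C (d : ℂ))
            * (∑ j ∈ Finset.range n, X ^ (n - 1 - j) * C ((d : ℂ) ^ j)) := by
  intro n hn p
  obtain ⟨m, rfl⟩ : ∃ m, n = m + 1 := ⟨n - 1, (Nat.succ_pred_eq_of_pos hn).symm⟩
  clear hn
  induction m generalizing p with
  | zero =>
      simp [hA p]
  | succ m ih =>
      have heval : (A p).eval 0 = p.eval 0 * d := by
        simp [hA p]
      rw [Function.iterate_succ_apply, ih (A p), heval, hA p]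
      have hsum : (∑ j ∈ Finset.range (m + 2), X ^ (m + 2 - 1 - j) * C ((d : ℂ) ^ j))
          = X ^ (m + 1) + C (d : ℂ) * ∑ j ∈ Finset.range (m + 1), X ^ (m + 1 - 1 - j) * C ((d : ℂ) ^ j) := by
        rw [Finset.sum_range_succ' (fun j => X ^ (m + 2 - 1 - j) * C ((d : ℂ) ^ j)) (m + 1)]
        rw [Finset.mul_sum]
        simp only [Nat.add_sub_cancel, pow_zero, map_one, mul_one]
        rw [add_comm]
        congr 1
        apply Finset.sum_congr rfl
        intro j hj
        have : m + 2 - 1 - (j + 1) = m + 1 - 1 - j := by omega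
        rw [this]
        simp only [Nat.add_sub_cancel, pow_succ', map_mul]
        ring
      rw [hsum]
      simp only [map_mul, Nat.add_sub_cancel]
      ring
end

section
/- Let $\{p_n(\lambda)\}_{n=0}^\infty$ be a sequence of polynomials satisfying the five-term recurrence $\gamma_{n-2}p_{n-2}(\lambda) + (\beta_{n-1}-\lambda a_{n-1})p_{n-1}(\lambda) + (\alpha_n - \lambda b_n)p_n(\lambda) + (\beta_n - \lambda a_n)p_{n+1}(\lambda) + \gamma_n p_{n+2}(\lambda) = 0$ for all $n \ge 0$ (with $p_{-2}=p_{-1}=0$, $\gamma_{-2}=\gamma_{-1}=a_{-1}=\beta_{-1}=0$), where $a_k > 0$, $b_k, \alpha_k, \beta_k \in \mathbb{R}$, $\gamma_k > 0$. Then for every $n \ge 1$ and all $\lambda, y \in \mathbb{C}$ with $\lambda \ne y$: $\sum_{k=0}^n (a_{k-1}p_{k-1}(y) + b_k p_k(y) + a_k p_{k+1}(y)) p_k(\lambda) = \gamma_{n-1}\frac{p_{n+1}(\lambda)p_{n-1}(y) - p_{n+1}(y)p_{n-1}(\lambda)}{\lambda - y} + \gamma_n \frac{p_{n+2}(\lambda)p_n(y)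 - p_{n+2}(y)p_n(\lambda)}{\lambda - y} + (\beta_n - a_n\lambda)\frac{p_{n+1}(\lambda)p_n(y) - p_{n+1}(y)p_n(\lambda)}{\lambda - y}$. -/
theorem stmt_8 (a b α β γ : ℕ → ℝ)
    (ha : ∀ k, 0 < a k) (hγ : ∀ k, 0 < γ k)
    (p : ℕ → ℂ → ℂ)
    (h0 : ∀ z : ℂ, ((α 0 : ℂ) - z * (b 0 : ℂ)) * p 0 z + ((β 0 : ℂ) - z * (a 0 : ℂ)) * p 1 z
        + (γ 0 : ℂ) * p 2 z = 0)
    (h1 : ∀ z : ℂ, ((β 0 : ℂ) - z * (a 0 : ℂ)) * p 0 z + ((α 1 : ℂ) - z * (b 1 : ℂ)) * p 1 z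
        + ((β 1 : ℂ) - z * (a 1 : ℂ)) * p 2 z + (γ 1 : ℂ) * p 3 z = 0)
    (hrec : ∀ (n : ℕ) (z : ℂ),
      (γ n : ℂ) * p n z + ((β (n + 1) : ℂ) - z * (a (n + 1) : ℂ)) * p (n + 1) z
        + ((α (n + 2) : ℂ) - z * (b (n + 2) : ℂ)) * p (n + 2) z
        + ((β (n + 2) : ℂ) - z * (a (n + 2) : ℂ)) * p (n + 3) z
        + (γ (n + 2) : ℂ) * p (n + 4) z = 0) :
    ∀ n : ℕ, 1 ≤ n → ∀ z y : ℂ, z ≠ y →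
      ∑ k ∈ Finset.range (n + 1),
          ((if k = 0 then (0 : ℂ) else (a (k - 1) : ℂ) * p (k - 1) y)
            + (b k : ℂ) * p k y + (a k : ℂ) * p (k + 1) y) * p k z
        = (γ (n - 1) : ℂ) * (p (n + 1) z * p (n - 1) y - p (n + 1) y * p (n - 1) z) / (z - y)
          + (γ n : ℂ) * (p (n + 2) z * p n y - p (n + 2) y * p n z) / (z - y)
          + ((β n : ℂ) - (a n : ℂ) * z)
              * (p (n + 1) z * p n y - p (n + 1) y * p n z) / (z - y) := by
  intro n hn z y hzy
  obtain ⟨m, rfl⟩ : ∃ m, n = m + 1 := ⟨n - 1, (Nat.succ_pred_eq_of_pos hn).symm⟩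
  have hzy' : z - y ≠ 0 := sub_ne_zero.mpr hzy
  have key : ∀ m : ℕ,
      (z - y) * ∑ k ∈ Finset.range (m + 2),
          ((if k = 0 then (0 : ℂ) else (a (k - 1) : ℂ) * p (k - 1) y)
            + (b k : ℂ) * p k y + (a k : ℂ) * p (k + 1) y) * p k z
      = (γ m : ℂ) * (p (m + 2) z * p m y - p (m + 2) y * p m z)
        + (γ (m + 1) : ℂ) * (p (m + 3) z * p (m + 1) y - p (m + 3) y * p (m + 1) z)
        + ((β (m + 1) : ℂ) - (a (m + 1) : ℂ) * z)
            * (p (m + 2) z * p (m + 1) y - p (m + 2) y * p (m + 1) z) := by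
    intro m
    induction m with
    | zero =>
        simp only [Finset.sum_range_succ, Finset.sum_range_one, if_pos rfl,
          if_neg (Nat.one_ne_zero)]
        norm_num
        linear_combination p 0 z * h0 y - p 0 y * h0 z + p 1 z * h1 y - p 1 y * h1 z
    | succ j ih =>
        rw [Finset.sum_range_succ, mul_add]
        rw [ih]
        simp only [if_neg (Nat.succ_ne_zero (j + 1)), Nat.add_sub_cancel,
          show j + 2 - 1 = j + 1 from rfl]
        linear_combination p (j + 2) z * hrec j y - p (j + 2) y * hrec j z
  have hk := key m
  simp only [Nat.add_sub_cancel]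
  field_simp
  linear_combination hk
end

section
/- Let $\{r_n\}_{n \ge 0}$ be polynomials, $c > -1$, $d \in \mathbb{R}$, and define $p_n(\lambda) = \frac{1}{c+1}r_n(\lambda) - \frac{d}{c+1}\cdot\frac{r_n(\lambda) - r_n(0)}{\lambda} + \frac{c}{c+1}r_n(0)$, where $\frac{r_n(\lambda)-r_n(0)}{\lambda}$ denotes the polynomial quotient. Then $p_n(d) = r_n(0)$ and $r_n(\lambda) = (c+1)p_n(\lambda) + (c+1)d\cdot\frac{p_n(\lambda)-p_n(d)}{\lambda - d} - c\,p_n(d)$. -/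
open Polynomial

theorem stmt_10 (c d : ℝ) (hc : -1 < c)
    (r q1 : Polynomial ℝ)
    (hq1 : r - C (r.eval 0) = X * q1)
    (p : Polynomial ℝ)
    (hp : p = (1 / (c + 1)) • r - (d / (c + 1)) • q1 + C (c / (c + 1) * r.eval 0)) :
    p.eval d = r.eval 0 ∧
      ∀ q2 : Polynomial ℝ, p - C (p.eval d) = (X - C d) * q2 →
        r = (c + 1) • p + ((c + 1) * d) • q2 - C (c * p.eval d) := by
  have h1 : c + 1 ≠ 0 := by linarith
  have hev : r.eval d - r.eval 0 = d * q1.eval d := by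
    have := congrArg (eval d) hq1
    simpa using this
  have hpd : p.eval d = r.eval 0 := by
    have := congrArg (eval d) hp
    simp only [eval_add, eval_sub, eval_smul, smul_eq_mul, eval_C] at this
    rw [this]
    field_simp
    nlinarith [hev]
  refine ⟨hpd, fun q2 hq2 => ?_⟩
  set a := r.eval 0 with ha
  have hr : r = X * q1 + C a := by linear_combination hq1
  have key : (X - C d) * q2 = (X - C d) * ((1 / (c + 1)) • q1) := by
    rw [← hq2, hpd, hp, hr]
    simp only [C_mul, C_mul', smul_add, smul_smul, sub_mul, mul_smul_comm]
    match_scalars <;> field_simp <;> ring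
  have hq2' : q2 = (1 / (c + 1)) • q1 :=
    mul_left_cancel₀ (by
      intro h
      have := congrArg natDegree h
      simp [natDegree_X_sub_C] at this) key
  rw [hq2', hpd, hp, hr]
  simp only [C_mul, C_mul', smul_add, smul_sub, smul_smul, mul_smul_comm]
  match_scalars <;> field_simp <;> ring
end

section
/- Let $\{r_n\}$ be polynomials satisfying the three-term recurrence $\lambda r_n(\lambda) = a_{n-1}r_{n-1}(\lambda) + b_n r_n(\lambda) + a_n r_{n+1}(\lambda)$ for $n \ge 0$ (with $r_{-1}=0$, $a_{-1}=0$), where $a_n > 0$, $b_n \in \mathbb{R}$. Let $c > -1$, $d \in \mathbb{R}$, and define $p_n$ by $(c+1)\lambda p_n(\lambda) - (c\lambda+d)r_n(0) = r_n(\lambda)(\lambda - d)$. Then the $p_n$ satisfy the non-standard three-term recurrence $\lambda p_n(\lambda) = \frac{p_n(d)}{c+1}(c\lambda + d) + a_{n-1}p_{n-1}(\lambda) + b_n p_n(\lambda) + a_n p_{n+1}(\lambda)$ for all $n \ge 0$ and all $\lambda \in \mathbb{C}$. -/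
open Polynomial

theorem stmt_11 (a b : ℕ → ℝ) (ha : ∀ n, 0 < a n)
    (c d : ℝ) (hc : -1 < c)
    (r p : ℕ → Polynomial ℂ)
    (hr0 : X * r 0 = C ((b 0 : ℂ)) * r 0 + C ((a 0 : ℂ)) * r 1)
    (hrrec : ∀ n, X * r (n + 1)
      = C ((a n : ℂ)) * r n + C ((b (n + 1) : ℂ)) * r (n + 1) + C ((a (n + 1) : ℂ)) * r (n + 2))
    (hp : ∀ n, C ((c : ℂ) + 1) * X * p n - (C (c : ℂ) * X + C (d : ℂ)) * C ((r n).eval 0)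
      = r n * (X - C (d : ℂ))) :
    ∀ n, X * p n
      = C ((p n).eval (d : ℂ) / ((c : ℂ) + 1)) * (C (c : ℂ) * X + C (d : ℂ))
        + (if n = 0 then 0 else C ((a (n - 1) : ℂ)) * p (n - 1))
        + C ((b n : ℂ)) * p n + C ((a n : ℂ)) * p (n + 1) := by
  have hc1 : ((c : ℂ) + 1) ≠ 0 := by
    have : ((c : ℂ) + 1) = ((c + 1 : ℝ) : ℂ) := by push_cast; ring
    rw [this, Complex.ofReal_ne_zero]
    linarith
  -- key evaluation lemma : p n (d) = r n (0)
  have hk : ∀ n, (p n).eval (d : ℂ) = (r n).eval 0 := by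
    intro n
    by_cases hd : (d : ℂ) = 0
    · -- d = 0 : cancel X in hp
      have h := hp n
      rw [hd, map_zero] at h
      have hX : (C ((c : ℂ) + 1) * p n - C (c : ℂ) * C ((r n).eval 0) - r n) * X = 0 := by
        linear_combination h
      rcases mul_eq_zero.mp hX with h0 | h0
      · have h0' := congrArg (eval (0 : ℂ)) h0
        simp only [eval_sub, eval_mul, eval_C, eval_zero] at h0'
        have : ((c : ℂ) + 1) * (p n).eval 0 = ((c : ℂ) + 1) * (r n).eval 0 := by
          linear_combination h0'
        have := mul_left_cancel₀ hc1 this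
        simp only [hd]; exact this
      · exact absurd h0 X_ne_zero
    · have h := congrArg (eval (d : ℂ)) (hp n)
      simp only [eval_sub, eval_mul, eval_add, eval_C, eval_X] at h
      have hmul : (((c : ℂ) + 1) * (d:ℂ)) * (p n).eval (d:ℂ) = (((c : ℂ) + 1) * (d:ℂ)) * (r n).eval 0 := by
        linear_combination h
      exact mul_left_cancel₀ (mul_ne_zero hc1 hd) hmul
  have hXA : (C ((c : ℂ) + 1) * X) ≠ 0 := mul_ne_zero (C_ne_zero.mpr hc1) X_ne_zero
  intro n
  have hdiv : C ((r n).eval 0 / ((c : ℂ) + 1)) * C ((c : ℂ) + 1) = C ((r n).eval 0) := by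
    rw [← C_mul, div_mul_cancel₀ _ hc1]
  rw [hk n]
  rcases n with _ | m
  · rw [if_pos rfl]
    have hev := congrArg (eval (0 : ℂ)) hr0
    simp only [eval_mul, eval_add, eval_C, eval_X, zero_mul] at hev
    have hC := congrArg C hev
    simp only [map_add, map_mul, map_zero] at hC
    apply mul_left_cancel₀ hXA
    linear_combination (X - C ((b 0 : ℝ) : ℂ)) * hp 0 - C ((a 0 : ℝ) : ℂ) * hp 1
      + (X - C (d : ℂ)) * hr0 - X * (C (c : ℂ) * X + C (d : ℂ)) * hdiv
      + (C (c : ℂ) * X + C (d : ℂ)) * hC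
  · rw [if_neg (Nat.succ_ne_zero m), Nat.add_sub_cancel]
    have hev := congrArg (eval (0 : ℂ)) (hrrec m)
    simp only [eval_mul, eval_add, eval_C, eval_X, zero_mul] at hev
    have hC := congrArg C hev
    simp only [map_add, map_mul, map_zero] at hC
    apply mul_left_cancel₀ hXA
    linear_combination (X - C ((b (m + 1) : ℝ) : ℂ)) * hp (m + 1) - C ((a m : ℝ) : ℂ) * hp m
      - C ((a (m + 1) : ℝ) : ℂ) * hp (m + 2)
      + (X - C (d : ℂ)) * hrrec m - X * (C (c : ℂ) * X + C (d : ℂ)) * hdiv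
      + (C (c : ℂ) * X + C (d : ℂ)) * hC
end

section
/- Let $r_n$ be a polynomial of degree $n$ satisfying the Jacobi differential equation $(1-t^2)r_n''(t) + (b-a-(a+b+2)t)r_n'(t) + n(n+a+b+1)r_n(t) = 0$, where $a,b > -1$. Define $p_n(\lambda) = r_n(\lambda) - \frac{r_n(\lambda)-r_n(0)}{\lambda}$ (polynomial quotient). Then $p_n$ satisfies the fourth-order differential equation $-(t+1)t(t-1)^2 y^{(4)} + (t-1)(-(a+b+10)t^2 + (b-a)t + 4)y^{(3)} + (-3(2a+2b+8)t^2 + (a+9b+22)t + 3a-3b)y'' + (-6(a+b+2)t + 2a+6b+8)y' + \lambda_n(t(t-1)y'' + 2(2t-1)y' + 2y) = 0$ with $\lambda_n = n(n+a+b+1)$. -/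
open Polynomial

theorem stmt_14 (a b : ℝ) (ha : -1 < a) (hb : -1 < b) (n : ℕ)
    (r : Polynomial ℝ) (hdeg : r.natDegree = n)
    (hode : (1 - X ^ 2) * derivative (derivative r)
        + (C (b - a) - C (a + b + 2) * X) * derivative r
        + C ((n : ℝ) * ((n : ℝ) + a + b + 1)) * r = 0)
    (q p : Polynomial ℝ)
    (hq : r - C (r.eval 0) = X * q)
    (hp : p = r - q) :
    -(X + 1) * X * (X - 1) ^ 2 * derivative (derivative (derivative (derivative p)))
      + (X - 1) * (-(C (a + b + 10)) * X ^ 2 + C (b - a) * X + 4)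
          * derivative (derivative (derivative p))
      + (C (-3 * (2 * a + 2 * b + 8)) * X ^ 2 + C (a + 9 * b + 22) * X + C (3 * a - 3 * b))
          * derivative (derivative p)
      + (C (-6 * (a + b + 2)) * X + C (2 * a + 6 * b + 8)) * derivative p
      + C ((n : ℝ) * ((n : ℝ) + a + b + 1))
          * (X * (X - 1) * derivative (derivative p) + C 2 * (2 * X - 1) * derivative p + 2 * p)
      = 0 := by
  have R0 : X * p = (X - 1) * r + C (r.eval 0) := by
    rw [hp]; linear_combination hq
  have R1 := congrArg derivative R0
  have R2 := congrArg derivative R1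
  have R3 := congrArg derivative R2
  have R4 := congrArg derivative R3
  have D1 := congrArg derivative hode
  have D2 := congrArg derivative D1
  simp only [derivative_add, derivative_sub, derivative_mul, derivative_C, derivative_X,
    derivative_X_pow, derivative_one, derivative_zero, derivative_neg, Nat.reduceSub, Nat.cast_ofNat, map_ofNat,
    derivative_ofNat, zero_mul, mul_zero, zero_add, add_zero, one_mul, mul_one, zero_sub,
    sub_zero, pow_one, pow_zero] at R1 R2 R3 R4 D1 D2
  simp only [C_add, C_sub, C_mul, C_neg, C_1, C_0, map_ofNat] at hode D1 D2 ⊢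
  refine mul_left_cancel₀ (pow_ne_zero 5 (X_ne_zero (R := ℝ))) ?_
  linear_combination (((2 : ℝ[X]) * (C ((n:ℝ)) * (C ((n:ℝ)) + C a + C b + 1)) * X ^ 5)) * R1
    + (((4 : ℝ[X]) * X ^ 5 + (-1 : ℝ[X]) * (C ((n:ℝ)) * (C ((n:ℝ)) + C a + C b + 1)) * X ^ 5
        + (3 : ℝ[X]) * C b * X ^ 5 + C a * X ^ 5 + (-6 : ℝ[X]) * X ^ 6
        + (C ((n:ℝ)) * (C ((n:ℝ)) + C a + C b + 1)) * X ^ 6 + (-3 : ℝ[X]) * C b * X ^ 6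
        + (-3 : ℝ[X]) * C a * X ^ 6)) * R2
    + (((-1 : ℝ[X]) * C b * X ^ 5 + C a * X ^ 5 + (6 : ℝ[X]) * X ^ 6 + (2 : ℝ[X]) * C b * X ^ 6
        + (-6 : ℝ[X]) * X ^ 7 + (-1 : ℝ[X]) * C b * X ^ 7 + (-1 : ℝ[X]) * C a * X ^ 7)) * R3
    + (((-1 : ℝ[X]) * X ^ 5 + X ^ 6 + X ^ 7 + (-1 : ℝ[X]) * X ^ 8)) * R4
    + (((2 : ℝ[X]) * X ^ 5)) * hode
    + (((-4 : ℝ[X]) * X ^ 5 + (4 : ℝ[X]) * X ^ 6)) * D1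
    + ((X ^ 5 + (-2 : ℝ[X]) * X ^ 6 + X ^ 7)) * D2
end

section
/- In the setting of the fourth-order differential equation of Theorem 4.2 (Jacobi case, parameters $a,b > -1$), the real parameter $\lambda$ for which the equation admits a real polynomial solution of exact degree $n$ is unique and equals $\lambda_n = n(n+a+b+1)$; moreover, the degree-$n$ real polynomial solution is unique up to a real constant multiple. -/
open Polynomial

/-- The 4-th order differential equation of Theorem 4.2 (Jacobi case), as a polynomial identity. -/
def jacobiEq4 (a b lam : ℝ) (y : Polynomial ℝ) : Prop :=
  -(X + 1) * X * (X - 1) ^ 2 * derivative (derivative (derivative (derivative y)))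
    + (X - 1) * (-(C (a + b + 10)) * X ^ 2 + C (b - a) * X + 4)
        * derivative (derivative (derivative y))
    + (C (-3 * (2 * a + 2 * b + 8)) * X ^ 2 + C (a + 9 * b + 22) * X + C (3 * a - 3 * b))
        * derivative (derivative y)
    + (C (-6 * (a + b + 2)) * X + C (2 * a + 6 * b + 8)) * derivative y
    + C lam * (X * (X - 1) * derivative (derivative y) + C 2 * (2 * X - 1) * derivative y + 2 * y)
    = 0

lemma jacobiEq4_key (a b lam : ℝ) (n : ℕ) (y : Polynomial ℝ) (hd : y.natDegree ≤ n)
    (h : jacobiEq4 a b lam y) :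
    ((n:ℝ)+1)*((n:ℝ)+2)*(lam - n*((n:ℝ)+a+b+1)) * y.coeff n = 0 := by
  set d1 := derivative y with hd1
  set d2 := derivative d1 with hd2
  set d3 := derivative d2 with hd3
  set d4 := derivative d3 with hd4
  rw [jacobiEq4] at h
  have hexp : d4 * C (-1:ℝ) * X^4 + d4 * C (1:ℝ) * X^3 + d4 * C (1:ℝ) * X^2 + d4 * C (-1:ℝ) * X^1
      + d3 * C (-(a+b+10)) * X^3 + d3 * C (2*b+10) * X^2 + d3 * C (4+a-b) * X^1 + d3 * C (-4:ℝ)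
      + d2 * C (-6*a-6*b-24) * X^2 + d2 * C (a+9*b+22) * X^1 + d2 * C (3*a-3*b)
      + d1 * C (-6*a-6*b-12) * X^1 + d1 * C (2*a+6*b+8)
      + d2 * C lam * X^2 + d2 * C (-lam) * X^1 + d1 * C (4*lam) * X^1 + d1 * C (-2*lam)
      + y * C (2*lam) = 0 := by
    rw [← h]; simp only [map_neg, map_add, map_mul, map_sub, map_one, map_ofNat]; ring
  have h1 : y.coeff (n+1) = 0 := coeff_eq_zero_of_natDegree_lt (by omega)
  have h2 : y.coeff (n+2) = 0 := coeff_eq_zero_of_natDegree_lt (by omega)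
  have h3 : y.coeff (n+3) = 0 := coeff_eq_zero_of_natDegree_lt (by omega)
  have hc := congrArg (fun p => coeff p n) hexp
  simp only [coeff_add, coeff_mul_X_pow', coeff_mul_C, coeff_zero, hd1, hd2, hd3, hd4,
    coeff_derivative] at hc
  rcases Nat.lt_or_ge n 4 with hn | hn
  · interval_cases n <;>
      (norm_num [h1, h2, h3, -mul_eq_zero] at hc ⊢ <;> push_cast <;> linear_combination hc)
  · obtain ⟨m, rfl⟩ := Nat.exists_eq_add_of_le hn
    have e1 : 4 + m - 4 = m := by omega
    have e2 : 4 + m - 3 = m + 1 := by omega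
    have e3 : 4 + m - 2 = m + 2 := by omega
    have e4 : 4 + m - 1 = m + 3 := by omega
    rw [e1, e2, e3, e4] at hc
    split_ifs at hc <;> try omega
    push_cast at hc ⊢
    rw [h1, h2, h3] at hc
    simp only [show m+1+1+1+1 = 4+m from by omega, show m+1+1+1+1+1 = 4+m+1 from by omega,
      show m+2+1+1+1 = 4+m+1 from by omega, show m+3+1+1 = 4+m+1 from by omega,
      show m+2+1+1+1+1 = 4+m+2 from by omega, show m+3+1+1+1 = 4+m+2 from by omega,
      show m+3+1+1+1+1 = 4+m+3 from by omega, show m+2+1+1 = 4+m from by omega,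
      show m+3+1 = 4+m from by omega,
      h1, h2, h3, zero_mul, mul_zero, zero_add, add_zero] at hc
    push_cast at hc ⊢
    linear_combination hc

lemma jacobiEq4_lam_eq (a b lam : ℝ) (n : ℕ) (y : Polynomial ℝ) (hy : y ≠ 0)
    (hdeg : y.natDegree = n) (h : jacobiEq4 a b lam y) :
    lam = (n : ℝ) * ((n : ℝ) + a + b + 1) := by
  have hk := jacobiEq4_key a b lam n y hdeg.le h
  have hcn : y.coeff n ≠ 0 := by
    rw [← hdeg]
    exact mt leadingCoeff_eq_zero.mp hy
  have h12 : ((n:ℝ)+1)*((n:ℝ)+2) ≠ 0 := by positivity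
  have hz : lam - (n:ℝ)*((n:ℝ)+a+b+1) = 0 := by
    by_contra hne
    exact (mul_ne_zero (mul_ne_zero h12 hne) hcn) hk
  linarith

lemma jacobiEq4_lin (a b lam c c' : ℝ) (y w : Polynomial ℝ)
    (hy : jacobiEq4 a b lam y) (hw : jacobiEq4 a b lam w) :
    jacobiEq4 a b lam (C c * y + C c' * w) := by
  rw [jacobiEq4] at *
  simp only [derivative_add, derivative_C_mul]
  linear_combination (C c : Polynomial ℝ) * hy + (C c' : Polynomial ℝ) * hw

theorem stmt_15 (a b : ℝ) (ha : -1 < a) (hb : -1 < b) (n : ℕ) :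
    (∀ (lam : ℝ) (y : Polynomial ℝ), y ≠ 0 → y.natDegree = n → jacobiEq4 a b lam y →
        lam = (n : ℝ) * ((n : ℝ) + a + b + 1))
    ∧ (∀ y y' : Polynomial ℝ, y ≠ 0 → y' ≠ 0 → y.natDegree = n → y'.natDegree = n →
        jacobiEq4 a b ((n : ℝ) * ((n : ℝ) + a + b + 1)) y →
        jacobiEq4 a b ((n : ℝ) * ((n : ℝ) + a + b + 1)) y' →
        ∃ t : ℝ, y' = C t * y) := by
  constructor
  · exact fun lam y hy hdeg h => jacobiEq4_lam_eq a b lam n y hy hdeg h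
  · intro y y' hy hy' hdy hdy' h h'
    set l := y.leadingCoeff with hl
    set l' := y'.leadingCoeff with hl'
    have hlne : l ≠ 0 := leadingCoeff_ne_zero.mpr hy
    have hlne' : l' ≠ 0 := leadingCoeff_ne_zero.mpr hy'
    set z : Polynomial ℝ := C l' * y + C (-l) * y' with hz
    have hzeq : jacobiEq4 a b ((n : ℝ) * ((n : ℝ) + a + b + 1)) z :=
      jacobiEq4_lin a b _ l' (-l) y y' h h'
    have hcy : y.coeff n = l := by rw [← hdy, hl]; rfl
    have hcy' : y'.coeff n = l' := by rw [← hdy', hl']; rfl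
    have hzn : z.coeff n = 0 := by
      rw [hz]
      simp only [coeff_add, coeff_C_mul, hcy, hcy']
      ring
    have hz0 : z = 0 := by
      by_contra hzne
      have hle : z.natDegree ≤ n := by
        rw [hz]
        apply le_trans (natDegree_add_le _ _)
        simp only [max_le_iff]
        constructor
        · exact le_trans (natDegree_C_mul_le _ _) hdy.le
        · exact le_trans (natDegree_C_mul_le _ _) hdy'.le
      have hdz : z.natDegree < n := by
        rcases lt_or_eq_of_le hle with h1 | h1
        · exact h1
        · exfalso
          apply mt leadingCoeff_eq_zero.mp hzne
          rw [leadingCoeff, h1]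
          exact hzn
      have heq := jacobiEq4_lam_eq a b _ z.natDegree z hzne rfl hzeq
      set m := z.natDegree
      have hmn : (m:ℝ) < n := by exact_mod_cast hdz
      have hm0 : (0:ℝ) ≤ (m:ℝ) := Nat.cast_nonneg m
      have h1n : (1:ℝ) ≤ (n:ℝ) := by
        have : 1 ≤ n := by omega
        exact_mod_cast this
      nlinarith [heq]
    refine ⟨l' / l, ?_⟩
    have hly : C l' * y = C l * y' := by
      rw [hz, C_neg] at hz0
      linear_combination hz0
    calc y' = C l⁻¹ * (C l * y') := by
              rw [← mul_assoc, ← C_mul, inv_mul_cancel₀ hlne, C_1, one_mul]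
      _ = C l⁻¹ * (C l' * y) := by rw [hly]
      _ = C (l' / l) * y := by rw [← mul_assoc, ← C_mul, div_eq_inv_mul]
end

section
/- Let $\sigma$ be a probability measure on $\mathbb{R}$ with all finite power moments such that $\int |g|^2 d\sigma > 0$ for every nonzero polynomial $g$. Let $c \ne 0$, $d \ne 0$ be real with $c > -1$, and let $\mathcal{A}$ be the operator on polynomials (viewed in $L^2_\sigma$) given by $\mathcal{A}[p] = [\lambda p(\lambda) + p(0)(c\lambda+d)]$. Then for every positive integer $N$, the operator $\mathcal{A}^N$ is not symmetric with respect to the $L^2_\sigma$ inner product: there exist polynomials $u, v$ with $\int \mathcal{A}^N[u]\,\overline{[v]}\,d\sigma \ne \int [u]\,\overline{\mathcal{A}^N[v]}\,d\sigma$. -/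
/-!
The operator is `𝒜 p = X * p + p(0) • (c X + d)`, so `(𝒜 p)(0) = d • p(0)` and polynomials
vanishing at `0` are simply multiplied by `X`. Hence
`𝒜^N p = X^N p + p(0) • φ` with `φ = 𝒜^N 1 - X^N`: a multiplication operator (symmetric)
plus a rank-one perturbation. Testing against `u = φ` and `v = X² φ` (which vanishes at `0`),
the multiplication parts cancel and
`(𝒜^N u) v - u (𝒜^N v) = φ(0) (X φ)² = d^N (X φ)²`, whose integral is nonzero because
the measure sees no nonzero polynomial.
-/

open Polynomial MeasureTheory

section Operator

variable {R : Type*} [CommRing R] {A : R[X] → R[X]} {c d : R}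

theorem eval_zero_iterate (hA : ∀ p, A p = X * p + C (p.eval 0) * (C c * X + C d))
    (N : ℕ) (p : R[X]) : (A^[N] p).eval 0 = d ^ N * p.eval 0 := by
  induction N with
  | zero => simp
  | succ N ih =>
    rw [Function.iterate_succ_apply', hA]
    simp only [eval_add, eval_mul, eval_X, eval_C, ih]
    ring

theorem iterate_eq_mul_add_eval_zero_mul
    (hA : ∀ p, A p = X * p + C (p.eval 0) * (C c * X + C d)) (N : ℕ) (p : R[X]) :
    A^[N] p = X ^ N * p + C (p.eval 0) * (A^[N] 1 - X ^ N) := by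
  induction N generalizing p with
  | zero => simp
  | succ N ih =>
    have hA0 : ∀ q, (A q).eval 0 = d * q.eval 0 := fun q => by
      simpa using eval_zero_iterate hA 1 q
    rw [Function.iterate_succ_apply, Function.iterate_succ_apply, ih, ih (A 1), hA0, hA0,
      hA p, hA 1]
    simp only [eval_one, map_one, map_mul]
    ring

theorem iterate_mul_sub_mul_iterate_of_eval_zero
    (hA : ∀ p, A p = X * p + C (p.eval 0) * (C c * X + C d)) (N : ℕ) (p : R[X]) {q : R[X]}
    (hq : q.eval 0 = 0) :
    A^[N] p * q - p * A^[N] q = C (p.eval 0) * (A^[N] 1 - X ^ N) * q := by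
  rw [iterate_eq_mul_add_eval_zero_mul hA N p, iterate_eq_mul_add_eval_zero_mul hA N q, hq,
    map_zero]
  ring

end Operator

theorem integrable_eval_of_integrable_pow {μ : Measure ℝ}
    (hmom : ∀ k : ℕ, Integrable (fun x : ℝ => x ^ k) μ) (p : ℝ[X]) :
    Integrable (fun x => p.eval x) μ := by
  induction p using Polynomial.induction_on' with
  | add p q hp hq => simpa [Pi.add_def] using hp.add hq
  | monomial k a => simpa using (hmom k).const_mul a

theorem stmt_17_general (sig : Measure ℝ)
    (hmom : ∀ k : ℕ, Integrable (fun x : ℝ => x ^ k) sig)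
    (hnd : ∀ g : Polynomial ℝ, g ≠ 0 → 0 < ∫ x, (g.eval x) ^ 2 ∂sig)
    (c d : ℝ) (hd0 : d ≠ 0)
    (A : Polynomial ℝ → Polynomial ℝ)
    (hA : ∀ p : Polynomial ℝ, A p = X * p + C (p.eval 0) * (C c * X + C d)) :
    ∀ N : ℕ, 0 < N → ∃ u v : Polynomial ℝ,
      ∫ x, (A^[N] u).eval x * v.eval x ∂sig ≠ ∫ x, u.eval x * (A^[N] v).eval x ∂sig := by
  intro N hN
  set φ := A^[N] 1 - X ^ N
  have hφ0 : φ.eval 0 = d ^ N := by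
    simp [φ, eval_zero_iterate hA, zero_pow hN.ne']
  have hφ_ne : φ ≠ 0 := fun h => pow_ne_zero N hd0 (by simpa [h] using hφ0.symm)
  refine ⟨φ, X ^ 2 * φ, fun h => ?_⟩
  have hint := integrable_eval_of_integrable_pow hmom
  have hsquare : C (d ^ N) * (X * φ) ^ 2 = A^[N] φ * (X ^ 2 * φ) - φ * A^[N] (X ^ 2 * φ) := by
    rw [iterate_mul_sub_mul_iterate_of_eval_zero hA N φ (by simp), hφ0]
    ring
  have hzero : ∫ x, (C (d ^ N) * (X * φ) ^ 2).eval x ∂sig = 0 := by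
    simp only [hsquare, eval_sub]
    rw [integral_sub (hint _) (hint _), sub_eq_zero]
    simpa only [eval_mul] using h
  simp_rw [eval_mul (p := C _), eval_C, eval_pow, integral_const_mul] at hzero
  exact mul_ne_zero (pow_ne_zero N hd0) (hnd _ (mul_ne_zero X_ne_zero hφ_ne)).ne' hzero

theorem stmt_17 (sig : Measure ℝ) [IsProbabilityMeasure sig]
    (hmom : ∀ k : ℕ, Integrable (fun x : ℝ => x ^ k) sig)
    (hnd : ∀ g : Polynomial ℝ, g ≠ 0 → 0 < ∫ x, (g.eval x) ^ 2 ∂sig)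
    (c d : ℝ) (hc : -1 < c) (hc0 : c ≠ 0) (hd0 : d ≠ 0)
    (A : Polynomial ℝ → Polynomial ℝ)
    (hA : ∀ p : Polynomial ℝ, A p = X * p + C (p.eval 0) * (C c * X + C d)) :
    ∀ N : ℕ, 0 < N → ∃ u v : Polynomial ℝ,
      ∫ x, (A^[N] u).eval x * v.eval x ∂sig ≠ ∫ x, u.eval x * (A^[N] v).eval x ∂sig :=
  stmt_17_general sig hmom hnd c d hd0 A hA
end
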